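/- arXiv:1407.6816 — 2 statements merged into one kernel-verified Lean document; each statement's English description precedes it below -/
import Mathlib

section
/- Let d ≥ 2, let {𝒫^(b)}_{b=1}^{d+1} be a set of d+1 mutually unbiased measurements on ℂ^d with efficiency parameter κ, and let ρ be a density operator on ℂ^d. Then C(κ,ρ) = Σ_{b=1}^{d+1} Σ_{n=1}^{d} (p_n^(b))² ≤ κ + 1. -/
open Matrix Finset Real
open scoped ComplexOrder

/-!
Write `Q_{b,n} = P_n^(b) - I/d` and `Δ = ρ - I/d`, and `v_{b,n} = p_n^(b) - 1/d = Tr(Q_{b,n} Δ)`.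
The MUM conditions say that the Gram matrix `Tr(Q_{b,n} Q_{b',n'})` is `δ_{bb'} λ (δ_{nn'} - 1/d)`
with `λ = (dκ - 1)/(d - 1)`, and `v` is an eigenvector of it with eigenvalue `λ` because
`∑_n v_{b,n} = 0`. For `T = ∑ v_{b,n} Q_{b,n}` this gives `Tr(T²) = λ S` and `Tr(T Δ) = S`,
where `S = ∑ v²`, so `0 ≤ Tr((T - λ Δ)²)` yields `S ≤ λ Tr(Δ²) ≤ λ (1 - 1/d) = κ - 1/d`,
using `Tr(ρ²) ≤ 1`. Finally `∑ p² = S + (d + 1)/d ≤ κ + 1`.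
-/

namespace Matrix

variable {m 𝕜 : Type*} [Fintype m] [RCLike 𝕜]

lemma IsHermitian.re_trace_mul_self_nonneg {A : Matrix m m 𝕜} (hA : A.IsHermitian) :
    0 ≤ RCLike.re (A * A).trace := by
  have h := (posSemidef_conjTranspose_mul_self A).trace_nonneg
  rw [hA.eq] at h
  exact (RCLike.nonneg_iff.mp h).1

lemma sum_sq_le_mul_re_trace_mul_self_of_gram {ι : Type*} [Fintype ι] {Q : ι → Matrix m m 𝕜}
    (hQ : ∀ i, (Q i).IsHermitian) {X : Matrix m m 𝕜} (hX : X.IsHermitian) {v : ι → ℝ}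
    {c : ℝ} (hc : 0 < c) (hQX : ∀ i, (Q i * X).trace = v i)
    (hgram : ∀ i, ∑ j, (v j : 𝕜) * (Q j * Q i).trace = c * v i) :
    ∑ i, v i ^ 2 ≤ c * RCLike.re (X * X).trace := by
  set T := ∑ j, (v j : 𝕜) • Q j
  have hT : T.IsHermitian :=
    isSelfAdjoint_sum _ fun j _ => (hQ j).smul (RCLike.conj_ofReal (v j))
  have htrace_T_mul : ∀ Y, (T * Y).trace = ∑ j, (v j : 𝕜) * (Q j * Y).trace := fun Y => by
    simp only [T, sum_mul, smul_mul, trace_sum, trace_smul, smul_eq_mul]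
  have hTQ : ∀ i, (T * Q i).trace = c * v i := fun i => by rw [htrace_T_mul, hgram]
  have hTT : (T * T).trace = ((c * ∑ i, v i ^ 2 : ℝ) : 𝕜) := by
    simp_rw [htrace_T_mul, trace_mul_comm (Q _) T, hTQ, mul_sum]
    push_cast
    exact sum_congr rfl fun i _ => by ring
  have hTX : (T * X).trace = ((∑ i, v i ^ 2 : ℝ) : 𝕜) := by
    simp_rw [htrace_T_mul, hQX]
    push_cast
    exact sum_congr rfl fun i _ => by ring
  have hpos := (hT.sub (hX.smul (RCLike.conj_ofReal (K := 𝕜) c))).re_trace_mul_self_nonneg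
  have hexpand : ((T - (c : 𝕜) • X) * (T - (c : 𝕜) • X)).trace
      = (T * T).trace - ((2 * c : ℝ) : 𝕜) * (T * X).trace + ((c ^ 2 : ℝ) : 𝕜) * (X * X).trace := by
    simp only [sub_mul, mul_sub, smul_mul, Matrix.mul_smul, smul_smul, trace_sub, trace_smul,
      smul_eq_mul, trace_mul_comm X T]
    push_cast
    ring
  rw [hexpand, hTT, hTX] at hpos
  simp only [map_add, map_sub, RCLike.re_ofReal_mul, RCLike.ofReal_re] at hpos
  exact le_of_mul_le_mul_left (by linarith) hc

variable [DecidableEq m]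

lemma trace_conjStarAlgAut (U : unitary (Matrix m m 𝕜)) (X : Matrix m m 𝕜) :
    (Unitary.conjStarAlgAut 𝕜 _ U X).trace = X.trace := by
  rw [Unitary.conjStarAlgAut_apply, trace_mul_cycle, Unitary.coe_star_mul_self, one_mul]

lemma IsHermitian.trace_mul_self {A : Matrix m m 𝕜} (hA : A.IsHermitian) :
    (A * A).trace = ∑ i, ((hA.eigenvalues i ^ 2 : ℝ) : 𝕜) := by
  conv_lhs => rw [hA.spectral_theorem, ← map_mul, trace_conjStarAlgAut, diagonal_mul_diagonal,
    trace_diagonal]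
  simp [sq]

lemma PosSemidef.re_trace_mul_self_le {A : Matrix m m 𝕜} (hA : A.PosSemidef) :
    RCLike.re (A * A).trace ≤ RCLike.re A.trace ^ 2 := by
  rw [hA.isHermitian.trace_mul_self, hA.isHermitian.trace_eq_sum_eigenvalues]
  simp only [map_sum, RCLike.ofReal_re]
  exact sum_sq_le_sq_sum_of_nonneg fun i _ => hA.eigenvalues_nonneg i

variable (m 𝕜) in
def maximallyMixed : Matrix m m 𝕜 := (Fintype.card m : 𝕜)⁻¹ • 1

lemma isHermitian_maximallyMixed : (maximallyMixed m 𝕜).IsHermitian :=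
  isHermitian_one.smul (IsSelfAdjoint.natCast _).inv₀

lemma trace_sub_maximallyMixed_mul_sub_maximallyMixed [Nonempty m] {A B : Matrix m m 𝕜}
    (hA : A.trace = 1) (hB : B.trace = 1) :
    ((A - maximallyMixed m 𝕜) * (B - maximallyMixed m 𝕜)).trace
      = (A * B).trace - (Fintype.card m : 𝕜)⁻¹ := by
  have hm : (Fintype.card m : 𝕜) ≠ 0 := Nat.cast_ne_zero.mpr Fintype.card_ne_zero
  simp only [maximallyMixed, sub_mul, mul_sub, smul_mul, Matrix.mul_smul, one_mul, mul_one,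
    smul_smul, trace_sub, trace_smul, trace_one, hA, hB, smul_eq_mul]
  field_simp
  ring

end Matrix

lemma sum_sq_eq_sum_sq_sub_inv_card_add {ι : Type*} [Fintype ι] [Nonempty ι] {p : ι → ℝ}
    (hp : ∑ i, p i = 1) :
    ∑ i, p i ^ 2 = ∑ i, (p i - (Fintype.card ι : ℝ)⁻¹) ^ 2 + (Fintype.card ι : ℝ)⁻¹ := by
  have hι : (Fintype.card ι : ℝ) ≠ 0 := Nat.cast_ne_zero.mpr Fintype.card_ne_zero
  simp only [sub_sq, sum_add_distrib, sum_sub_distrib, ← sum_mul, ← mul_sum, hp, sum_const,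
    card_univ, nsmul_eq_mul]
  field_simp
  ring

lemma sum_mul_ite_eq_of_sum_eq_zero {d : ℕ} {β : Type*} [Fintype β] [DecidableEq β]
    {v : β × Fin d → ℝ} (hv : ∀ b, ∑ n, v (b, n) = 0) (c : ℝ) (i : β × Fin d) :
    ∑ j : β × Fin d, v j *
        (if j.1 = i.1 then c * ((if j.2 = i.2 then 1 else 0) - 1 / d) else 0) = c * v i := by
  rw [Fintype.sum_prod_type, Fintype.sum_eq_single i.1 fun b hb => by simp [hb]]
  simp only [if_true, mul_sub, mul_ite, mul_one, mul_zero, sum_sub_distrib, sum_ite_eq',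
    mem_univ, ← sum_mul, hv]
  ring

section MutuallyUnbiased

variable {d : ℕ} {β : Type*} [DecidableEq β] {κ : ℝ} {P : β → Fin d → Matrix (Fin d) (Fin d) ℂ}

lemma trace_mul_of_mutuallyUnbiased (hd : 2 ≤ d) (htr1 : ∀ b n, (P b n).trace = 1)
    (htr2 : ∀ b b', b ≠ b' → ∀ n n', (P b n * P b' n').trace = ((1 / (d : ℝ) : ℝ) : ℂ))
    (htr3 : ∀ b n n', (P b n * P b n').trace =
      if n = n' then ((κ : ℝ) : ℂ) else (((1 - κ) / ((d : ℝ) - 1) : ℝ) : ℂ)) (b b' n n') :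
    ((P b n - maximallyMixed _ ℂ) * (P b' n' - maximallyMixed _ ℂ)).trace =
      ((if b = b' then (d * κ - 1) / (d - 1) * ((if n = n' then 1 else 0) - 1 / d) else 0 : ℝ)
        : ℂ) := by
  have : Nonempty (Fin d) := ⟨⟨0, by omega⟩⟩
  have hd0 : (d : ℂ) ≠ 0 := Nat.cast_ne_zero.mpr (by omega)
  have hd1 : (d : ℂ) - 1 ≠ 0 := sub_ne_zero.mpr (by exact_mod_cast (by omega : d ≠ 1))
  rw [trace_sub_maximallyMixed_mul_sub_maximallyMixed (htr1 b n) (htr1 b' n'), Fintype.card_fin]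
  split_ifs with hb hn
  · subst hb hn; rw [htr3, if_pos rfl]; push_cast; field_simp
  · subst hb; rw [htr3, if_neg hn]; push_cast; field_simp; ring
  · rw [htr2 b b' hb]; push_cast; ring

lemma sum_sq_sub_inv_le_of_mutuallyUnbiased [Fintype β] (hd : 2 ≤ d) (hκ : 1 / (d : ℝ) < κ)
    (hherm : ∀ b n, (P b n).IsHermitian) (htr1 : ∀ b n, (P b n).trace = 1)
    (htr2 : ∀ b b', b ≠ b' → ∀ n n', (P b n * P b' n').trace = ((1 / (d : ℝ) : ℝ) : ℂ))
    (htr3 : ∀ b n n', (P b n * P b n').trace =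
      if n = n' then ((κ : ℝ) : ℂ) else (((1 - κ) / ((d : ℝ) - 1) : ℝ) : ℂ))
    {ρ : Matrix (Fin d) (Fin d) ℂ} (hρ : ρ.PosSemidef) (hρtr : ρ.trace = 1)
    {p : β → Fin d → ℝ} (hp : ∀ b n, ((p b n : ℝ) : ℂ) = (P b n * ρ).trace)
    (hprob : ∀ b, ∑ n, p b n = 1) :
    ∑ i : β × Fin d, (p i.1 i.2 - (d : ℝ)⁻¹) ^ 2 ≤ κ - (d : ℝ)⁻¹ := by
  have : Nonempty (Fin d) := ⟨⟨0, by omega⟩⟩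
  have hd' : (2 : ℝ) ≤ d := by exact_mod_cast hd
  have hc : 0 < ((d : ℝ) * κ - 1) / (d - 1) := by
    have : 1 < (d : ℝ) * κ := by rwa [div_lt_iff₀' (by positivity)] at hκ
    exact div_pos (by linarith) (by linarith)
  set v : β × Fin d → ℝ := fun i => p i.1 i.2 - (d : ℝ)⁻¹
  have hv : ∀ b, ∑ n, v (b, n) = 0 := fun b => by
    simp [v, sum_sub_distrib, hprob b, mul_inv_cancel₀ (by positivity : (d : ℝ) ≠ 0)]
  have hpure : RCLike.re ((ρ - maximallyMixed _ ℂ) * (ρ - maximallyMixed _ ℂ)).trace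
      ≤ 1 - (d : ℝ)⁻¹ := by
    have h := hρ.re_trace_mul_self_le
    rw [hρtr] at h
    rw [trace_sub_maximallyMixed_mul_sub_maximallyMixed hρtr hρtr, Fintype.card_fin]
    simpa using h
  calc ∑ i, v i ^ 2
      ≤ (d * κ - 1) / (d - 1) *
          RCLike.re ((ρ - maximallyMixed _ ℂ) * (ρ - maximallyMixed _ ℂ)).trace := by
        refine sum_sq_le_mul_re_trace_mul_self_of_gram
          (fun i => (hherm i.1 i.2).sub isHermitian_maximallyMixed)
          (hρ.isHermitian.sub isHermitian_maximallyMixed) hc (fun i => ?_) (fun i => ?_)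
        · rw [trace_sub_maximallyMixed_mul_sub_maximallyMixed (htr1 _ _) hρtr, ← hp]
          simp [v]
        · simp_rw [trace_mul_of_mutuallyUnbiased hd htr1 htr2 htr3,
            RCLike.ofReal_eq_complex_ofReal, ← Complex.ofReal_mul, ← Complex.ofReal_sum,
            sum_mul_ite_eq_of_sum_eq_zero hv]
    _ ≤ (d * κ - 1) / (d - 1) * (1 - (d : ℝ)⁻¹) := mul_le_mul_of_nonneg_left hpure hc.le
    _ = κ - (d : ℝ)⁻¹ := by
        have : (d : ℝ) - 1 ≠ 0 := by linarith
        field_simp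

end MutuallyUnbiased

theorem stmt3_general (d : ℕ) (hd : 2 ≤ d) (κ : ℝ)
    (hκ1 : 1 / (d : ℝ) < κ)
    (P : Fin (d + 1) → Fin d → Matrix (Fin d) (Fin d) ℂ)
    (hpsd : ∀ b n, (P b n).PosSemidef)
    (hsum : ∀ b, ∑ n, P b n = 1)
    (htr1 : ∀ b n, (P b n).trace = 1)
    (htr2 : ∀ b b', b ≠ b' → ∀ n n', (P b n * P b' n').trace = ((1 / (d : ℝ) : ℝ) : ℂ))
    (htr3 : ∀ b n n', (P b n * P b n').trace =
      if n = n' then ((κ : ℝ) : ℂ) else (((1 - κ) / ((d : ℝ) - 1) : ℝ) : ℂ))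
    (ρ : Matrix (Fin d) (Fin d) ℂ) (hρ : ρ.PosSemidef) (hρtr : ρ.trace = 1)
    (p : Fin (d + 1) → Fin d → ℝ)
    (hp : ∀ b n, ((p b n : ℝ) : ℂ) = (P b n * ρ).trace) :
    ∑ b, ∑ n, (p b n) ^ 2 ≤ κ + 1 := by
  have : Nonempty (Fin d) := ⟨⟨0, by omega⟩⟩
  have hprob : ∀ b, ∑ n, p b n = 1 := fun b => by
    have h : ((∑ n, p b n : ℝ) : ℂ) = 1 := by
      push_cast
      simp_rw [hp, ← trace_sum, ← sum_mul, hsum, one_mul, hρtr]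
    exact_mod_cast h
  have hbound := sum_sq_sub_inv_le_of_mutuallyUnbiased hd hκ1
    (fun b n => (hpsd b n).isHermitian) htr1 htr2 htr3 hρ hρtr hp hprob
  have hsplit : ∀ b, ∑ n, p b n ^ 2 = ∑ n, (p b n - (d : ℝ)⁻¹) ^ 2 + (d : ℝ)⁻¹ := fun b => by
    simpa using sum_sq_eq_sum_sq_sub_inv_card_add (hprob b)
  calc ∑ b, ∑ n, p b n ^ 2
      = ∑ i : Fin (d + 1) × Fin d, (p i.1 i.2 - (d : ℝ)⁻¹) ^ 2 + (d + 1) * (d : ℝ)⁻¹ := by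
        simp [hsplit, sum_add_distrib, Fintype.sum_prod_type]
    _ ≤ κ - (d : ℝ)⁻¹ + (d + 1) * (d : ℝ)⁻¹ := by gcongr
    _ = κ + 1 := by
        field_simp
        ring

theorem stmt3 (d : ℕ) (hd : 2 ≤ d) (κ : ℝ)
    (hκ1 : 1 / (d : ℝ) < κ) (hκ2 : κ ≤ 1)
    (P : Fin (d + 1) → Fin d → Matrix (Fin d) (Fin d) ℂ)
    (hpsd : ∀ b n, (P b n).PosSemidef)
    (hsum : ∀ b, ∑ n, P b n = 1)
    (htr1 : ∀ b n, (P b n).trace = 1)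
    (htr2 : ∀ b b', b ≠ b' → ∀ n n', (P b n * P b' n').trace = ((1 / (d : ℝ) : ℝ) : ℂ))
    (htr3 : ∀ b n n', (P b n * P b n').trace =
      if n = n' then ((κ : ℝ) : ℂ) else (((1 - κ) / ((d : ℝ) - 1) : ℝ) : ℂ))
    (ρ : Matrix (Fin d) (Fin d) ℂ) (hρ : ρ.PosSemidef) (hρtr : ρ.trace = 1)
    (p : Fin (d + 1) → Fin d → ℝ)
    (hp : ∀ b n, ((p b n : ℝ) : ℂ) = (P b n * ρ).trace) :
    ∑ b, ∑ n, (p b n) ^ 2 ≤ κ + 1 :=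
  stmt3_general d hd κ hκ1 P hpsd hsum htr1 htr2 htr3 ρ hρ hρtr p hp
end

section
/- Let d ≥ 2, let {𝒫^(b)}_{b=1}^{d+1} be a set of d+1 mutually unbiased measurements on ℂ^d with efficiency parameter κ, let ρ be a density operator on ℂ^d, and let α ≥ 2 be a real number. Then (1/(d+1)) Σ_{b=1}^{d+1} R_α(𝒫^(b)|ρ) ≥ (α/(2(1−α))) · ln(C(κ,ρ)/(d+1)), where C(κ,ρ) = Σ_{b=1}^{d+1} Σ_{n=1}^{d} (p_n^(b))². -/
/-! Each measurement 𝒫^(b) turns ρ into a probability vector p^(b) (nonnegative because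
tr(AB) = tr(√B A √B) ≥ 0 for positive semidefinite A, B). For α ≥ 2 the ℓ^α-norm is dominated
by the ℓ²-norm, so ∑ₙ (pₙ)^α ≤ (∑ₙ pₙ²)^(α/2), i.e. R_α ≥ α/(2(α-1)) · R₂ for each b. Averaging
over b and applying Jensen's inequality for the concave logarithm to the collision
probabilities ∑ₙ pₙ² gives the bound. -/

open Matrix Finset Real
open scoped ComplexOrder

theorem Real.sum_rpow_le_rpow_sum {ι : Type*} (s : Finset ι) {a : ι → ℝ}
    (ha : ∀ i ∈ s, 0 ≤ a i) {t : ℝ} (ht : 1 ≤ t) :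
    ∑ i ∈ s, a i ^ t ≤ (∑ i ∈ s, a i) ^ t := by
  have ht' : 1 + (t - 1) ≠ 0 := by linarith
  have hS : 0 ≤ ∑ i ∈ s, a i := sum_nonneg ha
  calc ∑ i ∈ s, a i ^ t = ∑ i ∈ s, a i * a i ^ (t - 1) :=
        sum_congr rfl fun i hi => by rw [← rpow_one_add' (ha i hi) ht', add_sub_cancel]
    _ ≤ ∑ i ∈ s, a i * (∑ j ∈ s, a j) ^ (t - 1) :=
        sum_le_sum fun i hi => mul_le_mul_of_nonneg_left
          (rpow_le_rpow (ha i hi) (single_le_sum ha hi) (by linarith)) (ha i hi)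
    _ = (∑ i ∈ s, a i) ^ t := by rw [← sum_mul, ← rpow_one_add' hS ht', add_sub_cancel]

theorem Matrix.PosSemidef.trace_mul_nonneg {n 𝕜 : Type*} [Fintype n] [DecidableEq n] [RCLike 𝕜]
    {A B : Matrix n n 𝕜} (hA : A.PosSemidef) (hB : B.PosSemidef) : 0 ≤ (A * B).trace := by
  open scoped MatrixOrder in
  obtain ⟨S, hS, rfl⟩ : ∃ S : Matrix n n 𝕜, Sᴴ = S ∧ S * S = B :=
    ⟨CFC.sqrt B, (nonneg_iff_posSemidef.mp (CFC.sqrt_nonneg B)).1,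
      CFC.sqrt_mul_sqrt_self B (nonneg_iff_posSemidef.mpr hB)⟩
  have hSAS : (S * A * Sᴴ).PosSemidef := hA.mul_mul_conjTranspose_same S
  rw [hS] at hSAS
  rw [← Matrix.mul_assoc, trace_mul_cycle]
  exact hSAS.trace_nonneg

theorem Matrix.sum_trace_mul_eq_one {n ι 𝕜 : Type*} [Fintype n] [DecidableEq n] [Fintype ι]
    [Semiring 𝕜] {E : ι → Matrix n n 𝕜} (hE : ∑ i, E i = 1) {ρ : Matrix n n 𝕜}
    (hρ : ρ.trace = 1) : ∑ i, (E i * ρ).trace = 1 := by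
  rw [← trace_sum, ← sum_mul, hE, one_mul, hρ]

theorem Real.log_sum_rpow_le_mul_log_sum_sq {ι : Type*} [Fintype ι] {q : ι → ℝ}
    (hq : ∀ i, 0 ≤ q i) (hq0 : q ≠ 0) {α : ℝ} (hα : 2 ≤ α) :
    log (∑ i, q i ^ α) ≤ α / 2 * log (∑ i, q i ^ 2) := by
  obtain ⟨j, hj⟩ : ∃ j, q j ≠ 0 := Function.ne_iff.mp hq0
  have hqj : 0 < q j := (hq j).lt_of_ne' hj
  have hpow : ∀ i, q i ^ α = (q i ^ 2) ^ (α / 2) := fun i => by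
    rw [← rpow_natCast, ← rpow_mul (hq i)]; ring_nf
  have hpow_pos : 0 < ∑ i, q i ^ α :=
    sum_pos' (fun i _ => rpow_nonneg (hq i) _) ⟨j, mem_univ j, by positivity⟩
  have hsq_pos : 0 < ∑ i, q i ^ 2 :=
    sum_pos' (fun i _ => sq_nonneg _) ⟨j, mem_univ j, by positivity⟩
  calc log (∑ i, q i ^ α) ≤ log ((∑ i, q i ^ 2) ^ (α / 2)) := by
        refine log_le_log hpow_pos ?_
        simp only [hpow]
        exact sum_rpow_le_rpow_sum _ (fun i _ => sq_nonneg _) (by linarith)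
    _ = α / 2 * log (∑ i, q i ^ 2) := log_rpow hsq_pos _

theorem Real.div_mul_log_sum_sq_le_div_mul_log_sum_rpow {ι : Type*} [Fintype ι] {q : ι → ℝ}
    (hq : ∀ i, 0 ≤ q i) (hq0 : q ≠ 0) {α : ℝ} (hα : 2 ≤ α) :
    α / (2 * (1 - α)) * log (∑ i, q i ^ 2) ≤ 1 / (1 - α) * log (∑ i, q i ^ α) := by
  have hfac : α / (2 * (1 - α)) = 1 / (1 - α) * (α / 2) := by field_simp
  rw [hfac, mul_assoc]
  exact mul_le_mul_of_nonpos_left (log_sum_rpow_le_mul_log_sum_sq hq hq0 hα)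
    (div_nonpos_of_nonneg_of_nonpos zero_le_one (by linarith))

theorem Real.sum_log_div_card_le_log_sum_div_card {ι : Type*} [Fintype ι] [Nonempty ι]
    {x : ι → ℝ} (hx : ∀ i, 0 < x i) :
    (∑ i, log (x i)) / Fintype.card ι ≤ log ((∑ i, x i) / Fintype.card ι) := by
  have hcard : (0 : ℝ) < Fintype.card ι := by exact_mod_cast Fintype.card_pos
  have := strictConcaveOn_log_Ioi.concaveOn.le_map_sum (t := univ)
    (w := fun _ => 1 / (Fintype.card ι : ℝ)) (p := x) (fun _ _ => by positivity)
    (by simp [card_univ, hcard.ne']) (fun i _ => hx i)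
  simpa only [smul_eq_mul, one_div_mul_eq_div, ← sum_div] using this

theorem stmt9_general (d : ℕ)
    (P : Fin (d + 1) → Fin d → Matrix (Fin d) (Fin d) ℂ)
    (hpsd : ∀ b n, (P b n).PosSemidef)
    (hsum : ∀ b, ∑ n, P b n = 1)
    (ρ : Matrix (Fin d) (Fin d) ℂ) (hρ : ρ.PosSemidef) (hρtr : ρ.trace = 1)
    (p : Fin (d + 1) → Fin d → ℝ)
    (hp : ∀ b n, ((p b n : ℝ) : ℂ) = (P b n * ρ).trace)
    (α : ℝ) (hα : 2 ≤ α) :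
    (1 / ((d : ℝ) + 1)) * (∑ b, ((1 / (1 - α)) * Real.log (∑ n, (p b n) ^ α))) ≥
      (α / (2 * (1 - α))) * Real.log ((∑ b, ∑ n, (p b n) ^ 2) / ((d : ℝ) + 1)) := by
  have hp_nonneg : ∀ b n, 0 ≤ p b n := fun b n => by
    have := (hpsd b n).trace_mul_nonneg hρ
    rwa [← hp, Complex.zero_le_real] at this
  have hp_ne_zero : ∀ b, p b ≠ 0 := fun b hb => by
    have := sum_trace_mul_eq_one (hsum b) hρtr
    simp [← hp, hb] at this
  have hcollision_pos : ∀ b, 0 < ∑ n, p b n ^ 2 := fun b => by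
    obtain ⟨n, hn⟩ := Function.ne_iff.mp (hp_ne_zero b)
    have hpos : 0 < p b n := (hp_nonneg b n).lt_of_ne' hn
    exact sum_pos' (fun n _ => sq_nonneg _) ⟨n, mem_univ n, by positivity⟩
  have hjensen := sum_log_div_card_le_log_sum_div_card hcollision_pos
  simp only [Fintype.card_fin, Nat.cast_add, Nat.cast_one] at hjensen
  have hcoeff : α / (2 * (1 - α)) ≤ 0 :=
    div_nonpos_of_nonneg_of_nonpos (by linarith) (by linarith)
  calc α / (2 * (1 - α)) * log ((∑ b, ∑ n, p b n ^ 2) / (d + 1))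
      ≤ α / (2 * (1 - α)) * ((∑ b, log (∑ n, p b n ^ 2)) / (d + 1)) :=
        mul_le_mul_of_nonpos_left hjensen hcoeff
    _ = 1 / (d + 1) * ∑ b, α / (2 * (1 - α)) * log (∑ n, p b n ^ 2) := by
        rw [← mul_sum]; ring
    _ ≤ 1 / (d + 1) * ∑ b, 1 / (1 - α) * log (∑ n, p b n ^ α) := by
        gcongr 1 / (d + 1) * ∑ b, ?_ with b
        exact div_mul_log_sum_sq_le_div_mul_log_sum_rpow (hp_nonneg b) (hp_ne_zero b) hα

theorem stmt9 (d : ℕ) (hd : 2 ≤ d) (κ : ℝ)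
    (hκ1 : 1 / (d : ℝ) < κ) (hκ2 : κ ≤ 1)
    (P : Fin (d + 1) → Fin d → Matrix (Fin d) (Fin d) ℂ)
    (hpsd : ∀ b n, (P b n).PosSemidef)
    (hsum : ∀ b, ∑ n, P b n = 1)
    (htr1 : ∀ b n, (P b n).trace = 1)
    (htr2 : ∀ b b', b ≠ b' → ∀ n n', (P b n * P b' n').trace = ((1 / (d : ℝ) : ℝ) : ℂ))
    (htr3 : ∀ b n n', (P b n * P b n').trace =
      if n = n' then ((κ : ℝ) : ℂ) else (((1 - κ) / ((d : ℝ) - 1) : ℝ) : ℂ))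
    (ρ : Matrix (Fin d) (Fin d) ℂ) (hρ : ρ.PosSemidef) (hρtr : ρ.trace = 1)
    (p : Fin (d + 1) → Fin d → ℝ)
    (hp : ∀ b n, ((p b n : ℝ) : ℂ) = (P b n * ρ).trace)
    (α : ℝ) (hα : 2 ≤ α) :
    (1 / ((d : ℝ) + 1)) * (∑ b, ((1 / (1 - α)) * Real.log (∑ n, (p b n) ^ α))) ≥
      (α / (2 * (1 - α))) * Real.log ((∑ b, ∑ n, (p b n) ^ 2) / ((d : ℝ) + 1)) :=
  stmt9_general d P hpsd hsum ρ hρ hρtr p hp α hα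
end
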